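/- arXiv:1204.2609 — 2 statements merged into one kernel-verified Lean document; each statement's English description precedes it below -/
import Mathlib

section
/- (Theorem 1, supervised PAC-Bayes bound for stochastic classifiers with random variables). Let D be a probability measure on X × Y, let P be a (prior) probability measure on Θ, let δ ∈ (0,1], C > 0 and m ≥ 1. Then with probability at least 1 − δ over the draw of an i.i.d. sample S = ((x_1,y_1),…,(x_m,y_m)) ∼ D^{⊗m}, for every (posterior) probability measure Q on Θ that is absolutely continuous with respect to P and has finite KL(Q‖P), the true risk of the Gibbs classifier satisfies R(G_Q) ≤ (1/(1 − e^{−C})) · [1 − exp( −C·R_S(G_Q) − (1/m)·(KL(Q‖P) − ln δ) )]. -/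
/-!
Catoni's argument. Put `Φ(t) = -log (1 - (1 - e^{-C}) t)`. Since the loss takes values in
`{0, 1}`, `e^{-C ℓ} = 1 - (1 - e^{-C}) ℓ`, so for every fixed `θ` the random variable
`exp (m Φ(R(θ)) - C ∑ᵢ ℓ(θ, Sᵢ))` has mean exactly one under `D^{⊗m}`. By Fubini its `P`-average
`Z(S)` has mean one too, and Markov's inequality gives `Z(S) < 1/δ` with probability `≥ 1 - δ`.
On that event the Donsker–Varadhan change of measure bounds the `Q`-average of the exponent by
`KL(Q‖P) + log Z(S) ≤ KL(Q‖P) - log δ` simultaneously for all `Q`, Jensen's inequality for the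
convex `Φ` moves `Φ` outside the `Q`-average, and inverting `Φ` gives the bound.
-/

open MeasureTheory

/-- The label space `Y = {-1, +1}` (as a measurable subtype of `ℤ`). -/
abbrev Label : Type := ({-1, 1} : Set ℤ)

noncomputable def klDiv {Ω : Type*} [MeasurableSpace Ω] (Q P : Measure Ω) : ℝ :=
  ∫ ω, Real.log (Q.rnDeriv P ω).toReal ∂Q

open Real Set

/-- Catoni's function; the theorem is the inequality
`Φ_C(R(G_Q)) ≤ C R_S(G_Q) + (KL(Q‖P) - log δ)/m` solved for `R(G_Q)`. -/
noncomputable def catoniPhi (C t : ℝ) : ℝ := -log (1 - (1 - exp (-C)) * t)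

section CatoniPhi

variable {C t : ℝ}

lemma one_sub_one_sub_exp_neg_mul_eq_lineMap (C t : ℝ) :
    1 - (1 - exp (-C)) * t = AffineMap.lineMap (1 : ℝ) (exp (-C)) t := by
  rw [AffineMap.lineMap_apply_module, smul_eq_mul, smul_eq_mul]
  ring

lemma one_sub_one_sub_exp_neg_mul_pos (ht : t ∈ Icc (0 : ℝ) 1) :
    0 < 1 - (1 - exp (-C)) * t := by
  rcases ht.1.eq_or_lt with rfl | ht0
  · simp
  · nlinarith [mul_pos (exp_pos (-C)) ht0, ht.2]

lemma exp_neg_catoniPhi (ht : t ∈ Icc (0 : ℝ) 1) :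
    exp (-catoniPhi C t) = 1 - (1 - exp (-C)) * t := by
  rw [catoniPhi, neg_neg, exp_log (one_sub_one_sub_exp_neg_mul_pos ht)]

lemma catoniPhi_mem_Icc (hC : 0 ≤ C) (ht : t ∈ Icc (0 : ℝ) 1) : catoniPhi C t ∈ Icc 0 C := by
  have hpos := one_sub_one_sub_exp_neg_mul_pos (C := C) ht
  have hexp : exp (-C) ≤ 1 := exp_le_one_iff.2 (by linarith)
  constructor
  · exact neg_nonneg.2 (log_nonpos hpos.le (by nlinarith [ht.1]))
  · have := log_le_log (exp_pos (-C)) (show exp (-C) ≤ 1 - (1 - exp (-C)) * t by nlinarith [ht.2])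
    rw [log_exp] at this
    rw [catoniPhi]
    linarith

lemma measurable_catoniPhi (C : ℝ) : Measurable (catoniPhi C) := by
  unfold catoniPhi
  fun_prop

lemma continuousOn_catoniPhi (C : ℝ) : ContinuousOn (catoniPhi C) (Icc 0 1) :=
  ((continuous_const.sub (continuous_const.mul continuous_id)).continuousOn.log
    fun _ ht => (one_sub_one_sub_exp_neg_mul_pos ht).ne').neg

lemma convexOn_catoniPhi (C : ℝ) : ConvexOn ℝ (Icc 0 1) (catoniPhi C) := by
  have h := (strictConcaveOn_log_Ioi.concaveOn.neg).comp_affineMap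
    (AffineMap.lineMap (1 : ℝ) (exp (-C)))
  refine (h.subset (fun t ht => ?_) (convex_Icc 0 1)).congr fun t _ => ?_
  · simpa [← one_sub_one_sub_exp_neg_mul_eq_lineMap] using one_sub_one_sub_exp_neg_mul_pos ht
  · simp [catoniPhi, one_sub_one_sub_exp_neg_mul_eq_lineMap]

lemma le_of_catoniPhi_le (hC : 0 < C) (ht : t ∈ Icc (0 : ℝ) 1) {B : ℝ} (h : catoniPhi C t ≤ B) :
    t ≤ 1 / (1 - exp (-C)) * (1 - exp (-B)) := by
  have ha : 0 < 1 - exp (-C) := sub_pos.2 (exp_lt_one_iff.2 (neg_lt_zero.2 hC))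
  have : exp (-B) ≤ 1 - (1 - exp (-C)) * t := by
    rw [← exp_neg_catoniPhi ht]
    exact exp_le_exp.2 (neg_le_neg h)
  rw [one_div, ← div_eq_inv_mul, le_div_iff₀ ha]
  linarith

end CatoniPhi

lemma integral_mem_Icc_zero_one {α : Type*} [MeasurableSpace α] {μ : Measure α}
    [IsProbabilityMeasure μ] {f : α → ℝ} (hf : ∀ x, f x ∈ Icc (0 : ℝ) 1) :
    ∫ x, f x ∂μ ∈ Icc (0 : ℝ) 1 := by
  refine ⟨integral_nonneg fun x => (hf x).1, ?_⟩
  simpa using integral_mono_of_nonneg (ae_of_all _ fun x => (hf x).1)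
    (integrable_const (μ := μ) (1 : ℝ)) (ae_of_all _ fun x => (hf x).2)

/-- The Donsker–Varadhan change of measure: Gibbs' inequality for `Q` against `P.tilted g`. -/
lemma integral_le_klDiv_add_log_integral_exp {Ω : Type*} [MeasurableSpace Ω]
    {Q P : Measure Ω} [IsProbabilityMeasure Q] [IsProbabilityMeasure P] (hQP : Q ≪ P)
    (hKL : Integrable (llr Q P) Q) {g : Ω → ℝ} (hgQ : Integrable g Q)
    (hgP : Integrable (fun ω => exp (g ω)) P) :
    ∫ ω, g ω ∂Q ≤ klDiv Q P + log (∫ ω, exp (g ω) ∂P) := by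
  have := isProbabilityMeasure_tilted hgP
  have hgibbs := InformationTheory.integral_llr_add_sub_measure_univ_nonneg
    (hQP.trans (absolutelyContinuous_tilted hgP)) (integrable_llr_tilted_right hQP hgQ hKL hgP)
  rw [integral_llr_tilted_right hQP hgQ hgP hKL] at hgibbs
  simp only [probReal_univ] at hgibbs
  change _ ≤ ∫ ω, llr Q P ω ∂Q + _
  linarith

lemma ofReal_one_sub_le_measure_lt_inv {α : Type*} [MeasurableSpace α] {μ : Measure α}
    [IsProbabilityMeasure μ] {f : α → ℝ} (hf0 : 0 ≤ᵐ[μ] f) (hf : Integrable f μ)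
    (hf1 : ∫ x, f x ∂μ ≤ 1) {δ : ℝ} (hδ : 0 < δ) :
    ENNReal.ofReal (1 - δ) ≤ μ {x | f x < δ⁻¹} := by
  have hmarkov : μ.real {x | δ⁻¹ ≤ f x} ≤ δ := by
    have := (mul_meas_ge_le_integral_of_nonneg hf0 hf δ⁻¹).trans hf1
    rwa [inv_mul_le_iff₀ hδ, mul_one] at this
  have hcompl : {x | f x < δ⁻¹} = {x | δ⁻¹ ≤ f x}ᶜ := by
    ext x
    simp
  rw [hcompl, prob_compl_eq_one_sub₀ (nullMeasurableSet_le aemeasurable_const hf.aemeasurable),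
    ENNReal.ofReal_sub _ hδ.le, ENNReal.ofReal_one]
  exact tsub_le_tsub_left ((ENNReal.le_ofReal_iff_toReal_le (measure_ne_top _ _) hδ.le).2 hmarkov) 1

lemma integral_pi_exp_neg_mul_sum {α ι : Type*} [MeasurableSpace α] [Fintype ι]
    (μ : Measure α) [IsProbabilityMeasure μ] {f : α → ℝ} (hf : Measurable f)
    (hf01 : ∀ x, f x = 0 ∨ f x = 1) (C : ℝ) :
    ∫ S, exp (-C * ∑ i, f (S i)) ∂(Measure.pi fun _ : ι => μ) =
      exp (-(Fintype.card ι) * catoniPhi C (∫ x, f x ∂μ)) := by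
  have hf_Icc : ∀ x, f x ∈ Icc (0 : ℝ) 1 := fun x => by rcases hf01 x with h | h <;> simp [h]
  have hf_int : Integrable f μ := .of_mem_Icc 0 1 hf.aemeasurable (ae_of_all _ hf_Icc)
  -- on `{0, 1}` the map `t ↦ e^{-C t}` is affine
  have hexp : ∀ x, exp (-C * f x) = 1 - (1 - exp (-C)) * f x := fun x => by
    rcases hf01 x with h | h <;> simp [h]
  calc ∫ S, exp (-C * ∑ i, f (S i)) ∂(Measure.pi fun _ : ι => μ)
      = ∫ S, ∏ i, (1 - (1 - exp (-C)) * f (S i)) ∂(Measure.pi fun _ : ι => μ) := by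
        simp_rw [Finset.mul_sum, exp_sum, hexp]
    _ = (1 - (1 - exp (-C)) * ∫ x, f x ∂μ) ^ Fintype.card ι := by
        rw [integral_fintype_prod_eq_pow (fun x => 1 - (1 - exp (-C)) * f x),
          integral_sub (integrable_const 1) (hf_int.const_mul _), integral_const_mul]
        simp
    _ = exp (-(Fintype.card ι) * catoniPhi C (∫ x, f x ∂μ)) := by
        rw [← exp_neg_catoniPhi (integral_mem_Icc_zero_one hf_Icc), ← exp_nat_mul]
        ring_nf

section CatoniExponent

variable {Θ α : Type*} [MeasurableSpace α] {C : ℝ}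

noncomputable def catoniExponent (ℓ : Θ → α → ℝ) (D : Measure α) (C : ℝ) {m : ℕ}
    (S : Fin m → α) (θ : Θ) : ℝ :=
  m * catoniPhi C (∫ x, ℓ θ x ∂D) - C * ∑ i, ℓ θ (S i)

lemma catoniExponent_mem_Icc {ℓ : Θ → α → ℝ} (hℓ : ∀ θ x, ℓ θ x ∈ Icc (0 : ℝ) 1)
    (D : Measure α) [IsProbabilityMeasure D] (hC : 0 ≤ C) {m : ℕ} (S : Fin m → α) (θ : Θ) :
    catoniExponent ℓ D C S θ ∈ Icc (-(C * m)) (C * m) := by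
  have hΦ := catoniPhi_mem_Icc hC (integral_mem_Icc_zero_one (μ := D) (hℓ θ))
  have hsum : ∑ i, ℓ θ (S i) ∈ Icc (0 : ℝ) m := by
    refine ⟨Finset.sum_nonneg fun i _ => (hℓ θ (S i)).1, ?_⟩
    simpa using Finset.sum_le_sum fun i (_ : i ∈ Finset.univ) => (hℓ θ (S i)).2
  rw [catoniExponent]
  constructor <;> nlinarith [hΦ.1, hΦ.2, hsum.1, hsum.2]

lemma exp_catoniExponent_mem_Icc {ℓ : Θ → α → ℝ} (hℓ : ∀ θ x, ℓ θ x ∈ Icc (0 : ℝ) 1)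
    (D : Measure α) [IsProbabilityMeasure D] (hC : 0 ≤ C) {m : ℕ} (S : Fin m → α) (θ : Θ) :
    exp (catoniExponent ℓ D C S θ) ∈ Icc (exp (-(C * m))) (exp (C * m)) :=
  have h := catoniExponent_mem_Icc hℓ D hC S θ
  ⟨exp_le_exp.2 h.1, exp_le_exp.2 h.2⟩

lemma measurable_catoniExponent [MeasurableSpace Θ] {ℓ : Θ → α → ℝ}
    (hℓ : Measurable (Function.uncurry ℓ)) (D : Measure α) [SFinite D] (C : ℝ) (m : ℕ) :
    Measurable (Function.uncurry (catoniExponent ℓ D C (m := m))) := by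
  have hrisk : Measurable fun θ => ∫ x, ℓ θ x ∂D :=
    hℓ.stronglyMeasurable.integral_prod_right'.measurable
  have hsum : Measurable fun q : (Fin m → α) × Θ => ∑ i, ℓ q.2 (q.1 i) :=
    Finset.measurable_sum _ fun i _ => hℓ.comp (measurable_snd.prodMk
      ((measurable_pi_apply i).comp measurable_fst))
  exact (measurable_const.mul ((measurable_catoniPhi C).comp (hrisk.comp measurable_snd))).sub
    (measurable_const.mul hsum)

lemma integral_exp_catoniExponent [MeasurableSpace Θ] {ℓ : Θ → α → ℝ}
    (hℓ : Measurable (Function.uncurry ℓ)) (hℓ01 : ∀ θ x, ℓ θ x = 0 ∨ ℓ θ x = 1)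
    (D : Measure α) [IsProbabilityMeasure D] (C : ℝ) (m : ℕ) (θ : Θ) :
    ∫ S, exp (catoniExponent ℓ D C S θ) ∂(Measure.pi fun _ : Fin m => D) = 1 := by
  simp_rw [catoniExponent, sub_eq_add_neg, exp_add, ← neg_mul]
  rw [integral_const_mul, integral_pi_exp_neg_mul_sum D (f := ℓ θ)
    (hℓ.comp measurable_prodMk_left) (hℓ01 θ), Fintype.card_fin, ← exp_add]
  simp

lemma ofReal_one_sub_le_measure_integral_exp_catoniExponent_lt [MeasurableSpace Θ]
    {ℓ : Θ → α → ℝ} (hℓ : Measurable (Function.uncurry ℓ)) (hℓ01 : ∀ θ x, ℓ θ x = 0 ∨ ℓ θ x = 1)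
    (D : Measure α) [IsProbabilityMeasure D] (P : Measure Θ) [IsProbabilityMeasure P]
    (hC : 0 ≤ C) (m : ℕ) {δ : ℝ} (hδ : 0 < δ) :
    ENNReal.ofReal (1 - δ) ≤ (Measure.pi fun _ : Fin m => D)
      {S | ∫ θ, exp (catoniExponent ℓ D C S θ) ∂P < δ⁻¹} := by
  have hℓ_Icc : ∀ θ x, ℓ θ x ∈ Icc (0 : ℝ) 1 := fun θ x => by
    rcases hℓ01 θ x with h | h <;> simp [h]
  have hint : Integrable (Function.uncurry fun S θ => exp (catoniExponent ℓ D C S θ))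
      ((Measure.pi fun _ : Fin m => D).prod P) :=
    .of_mem_Icc _ _ (measurable_exp.comp (measurable_catoniExponent hℓ D C m)).aemeasurable
      (ae_of_all _ fun q => exp_catoniExponent_mem_Icc hℓ_Icc D hC q.1 q.2)
  refine ofReal_one_sub_le_measure_lt_inv
    (ae_of_all _ fun S => integral_nonneg fun θ => (exp_pos _).le) hint.integral_prod_left
    (le_of_eq ?_) hδ
  rw [integral_integral_swap hint]
  simp [integral_exp_catoniExponent hℓ hℓ01 D C m]

lemma catoniPhi_integral_le_of_integral_exp_catoniExponent_lt [MeasurableSpace Θ]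
    {ℓ : Θ → α → ℝ} (hℓ : Measurable (Function.uncurry ℓ)) (hℓ_Icc : ∀ θ x, ℓ θ x ∈ Icc (0 : ℝ) 1)
    (D : Measure α) [IsProbabilityMeasure D] {P Q : Measure Θ} [IsProbabilityMeasure P]
    [IsProbabilityMeasure Q] (hQP : Q ≪ P) (hKL : Integrable (llr Q P) Q) (hC : 0 ≤ C)
    {m : ℕ} (hm : 0 < m) {S : Fin m → α} {δ : ℝ}
    (hS : ∫ θ, exp (catoniExponent ℓ D C S θ) ∂P < δ⁻¹) :
    catoniPhi C (∫ θ, ∫ x, ℓ θ x ∂D ∂Q) ≤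
      C * ∫ θ, (m : ℝ)⁻¹ * ∑ i, ℓ θ (S i) ∂Q + 1 / m * (klDiv Q P - log δ) := by
  set r : Θ → ℝ := fun θ => ∫ x, ℓ θ x ∂D
  have hr : ∀ θ, r θ ∈ Icc (0 : ℝ) 1 := fun θ => integral_mem_Icc_zero_one (hℓ_Icc θ)
  have hr_meas : Measurable r := hℓ.stronglyMeasurable.integral_prod_right'.measurable
  have hΦr_int : Integrable (fun θ => catoniPhi C (r θ)) Q :=
    .of_mem_Icc 0 C ((measurable_catoniPhi C).comp hr_meas).aemeasurable
      (ae_of_all _ fun θ => catoniPhi_mem_Icc hC (hr θ))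
  have hjensen : catoniPhi C (∫ θ, r θ ∂Q) ≤ ∫ θ, catoniPhi C (r θ) ∂Q :=
    (convexOn_catoniPhi C).map_integral_le (continuousOn_catoniPhi C) isClosed_Icc
      (ae_of_all _ hr) (.of_mem_Icc 0 1 hr_meas.aemeasurable (ae_of_all _ hr)) hΦr_int
  have hg_meas : Measurable (catoniExponent ℓ D C S) :=
    (measurable_catoniExponent hℓ D C m).comp measurable_prodMk_left
  have hexp_int : Integrable (fun θ => exp (catoniExponent ℓ D C S θ)) P :=
    .of_mem_Icc _ _ (measurable_exp.comp hg_meas).aemeasurable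
      (ae_of_all _ (exp_catoniExponent_mem_Icc hℓ_Icc D hC S))
  have hDV := integral_le_klDiv_add_log_integral_exp hQP hKL
    (.of_mem_Icc _ _ hg_meas.aemeasurable (ae_of_all _ (catoniExponent_mem_Icc hℓ_Icc D hC S)))
    hexp_int
  have hlog : log (∫ θ, exp (catoniExponent ℓ D C S θ) ∂P) ≤ -log δ := by
    rw [← log_inv]
    exact (log_lt_log (integral_exp_pos hexp_int) hS).le
  have hsum_int : Integrable (fun θ => ∑ i, ℓ θ (S i)) Q :=
    integrable_finsetSum _ fun i _ => .of_mem_Icc 0 1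
      (hℓ.comp measurable_prodMk_right).aemeasurable (ae_of_all _ fun θ => hℓ_Icc θ (S i))
  have hsplit : ∫ θ, catoniExponent ℓ D C S θ ∂Q =
      m * ∫ θ, catoniPhi C (r θ) ∂Q - C * m * ∫ θ, (m : ℝ)⁻¹ * ∑ i, ℓ θ (S i) ∂Q := by
    rw [integral_const_mul, ← mul_assoc, mul_assoc C, mul_inv_cancel₀ (by positivity), mul_one,
      ← integral_const_mul, ← integral_const_mul, ← integral_sub (hΦr_int.const_mul _)
        (hsum_int.const_mul _)]
    rfl
  have hbound : (∫ θ, catoniPhi C (r θ) ∂Q - C * ∫ θ, (m : ℝ)⁻¹ * ∑ i, ℓ θ (S i) ∂Q) * m ≤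
      klDiv Q P - log δ := by
    rw [hsplit] at hDV
    linarith
  rw [← le_div_iff₀ (by exact_mod_cast hm)] at hbound
  rw [one_div, ← div_eq_inv_mul]
  linarith

end CatoniExponent

theorem pac_bayes_supervised_general
    {X Θ : Type*} [MeasurableSpace X] [MeasurableSpace Θ]
    (F : Θ → X → Label) (hF : Measurable fun p : Θ × X => F p.1 p.2)
    (D : Measure (X × Label)) [IsProbabilityMeasure D]
    (P : Measure Θ) [IsProbabilityMeasure P]
    (δ : ℝ) (hδ0 : 0 < δ)
    (C : ℝ) (hC : 0 < C)
    (m : ℕ) (hm : 1 ≤ m) :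
    ENNReal.ofReal (1 - δ) ≤
      (Measure.pi fun _ : Fin m => D)
        {S : Fin m → X × Label |
          ∀ Q : Measure Θ, IsProbabilityMeasure Q → Q ≪ P →
            Integrable (fun θ => Real.log (Q.rnDeriv P θ).toReal) Q →
            (∫ θ, ∫ p, (if F θ p.1 ≠ p.2 then (1 : ℝ) else 0) ∂D ∂Q) ≤
              (1 / (1 - Real.exp (-C))) *
                (1 - Real.exp
                  (-C * (∫ θ, (m : ℝ)⁻¹ *
                      ∑ i : Fin m, (if F θ (S i).1 ≠ (S i).2 then (1 : ℝ) else 0) ∂Q)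
                   - (1 / (m : ℝ)) * (klDiv Q P - Real.log δ)))} := by
  set ℓ : Θ → X × Label → ℝ := fun θ p => if F θ p.1 ≠ p.2 then 1 else 0
  have hℓ_meas : Measurable (Function.uncurry ℓ) :=
    Measurable.ite (measurableSet_eq_fun (hF.comp (measurable_fst.prodMk measurable_snd.fst))
      measurable_snd.snd).compl measurable_const measurable_const
  have hℓ01 : ∀ θ p, ℓ θ p = 0 ∨ ℓ θ p = 1 := fun θ p => by
    by_cases h : F θ p.1 ≠ p.2 <;> simp [ℓ, h]
  have hℓ_Icc : ∀ θ p, ℓ θ p ∈ Icc (0 : ℝ) 1 := fun θ p => by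
    rcases hℓ01 θ p with h | h <;> simp [h]
  refine (ofReal_one_sub_le_measure_integral_exp_catoniExponent_lt hℓ_meas hℓ01 D P hC.le m
    hδ0).trans (measure_mono fun S hS Q _ hQP hKL => ?_)
  have hrisk : ∫ θ, ∫ p, ℓ θ p ∂D ∂Q ∈ Icc (0 : ℝ) 1 :=
    integral_mem_Icc_zero_one fun θ => integral_mem_Icc_zero_one (hℓ_Icc θ)
  convert le_of_catoniPhi_le hC hrisk
    (catoniPhi_integral_le_of_integral_exp_catoniExponent_lt hℓ_meas hℓ_Icc D hQP hKL hC.le hm hS)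
    using 4
  ring

/-- **Theorem 1 (supervised PAC-Bayes bound for stochastic classifiers).**
With probability at least `1 - δ` over the draw of an i.i.d. sample
`S ∼ D^{⊗m}`, every posterior `Q ≪ P` with finite `KL(Q‖P)` satisfies
`R(G_Q) ≤ (1/(1 - e^{-C})) (1 - exp(-C R_S(G_Q) - (1/m)(KL(Q‖P) - ln δ)))`. -/
theorem pac_bayes_supervised
    {X Θ : Type*} [MeasurableSpace X] [MeasurableSpace Θ]
    (F : Θ → X → Label) (hF : Measurable fun p : Θ × X => F p.1 p.2)
    (D : Measure (X × Label)) [IsProbabilityMeasure D]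
    (P : Measure Θ) [IsProbabilityMeasure P]
    (δ : ℝ) (hδ0 : 0 < δ) (hδ1 : δ ≤ 1)
    (C : ℝ) (hC : 0 < C)
    (m : ℕ) (hm : 1 ≤ m) :
    ENNReal.ofReal (1 - δ) ≤
      (Measure.pi fun _ : Fin m => D)
        {S : Fin m → X × Label |
          ∀ Q : Measure Θ, IsProbabilityMeasure Q → Q ≪ P →
            Integrable (fun θ => Real.log (Q.rnDeriv P θ).toReal) Q →
            (∫ θ, ∫ p, (if F θ p.1 ≠ p.2 then (1 : ℝ) else 0) ∂D ∂Q) ≤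
              (1 / (1 - Real.exp (-C))) *
                (1 - Real.exp
                  (-C * (∫ θ, (m : ℝ)⁻¹ *
                      ∑ i : Fin m, (if F θ (S i).1 ≠ (S i).2 then (1 : ℝ) else 0) ∂Q)
                   - (1 / (m : ℝ)) * (klDiv Q P - Real.log δ)))} :=
  pac_bayes_supervised_general F hF D P δ hδ0 C hC m hm
end

section
/- (Gaussian error probability of a stochastic linear classifier, Eq. (12)). Let d ≥ 1, u ∈ ℝ^d, φ ∈ ℝ^d with φ ≠ 0, and y ∈ {−1,+1}. Let w be distributed according to N(u, I) = ⊗_{i=1}^d gaussianReal(u_i, 1) on ℝ^d. Then the probability that sign(⟨w, φ⟩) ≠ y equals Φ( y·⟨u, φ⟩ / ‖φ‖ ), where sign(a) = +1 if a > 0 and sign(a) = −1 otherwise, and Φ(a) = ∫_a^∞ (1/√(2π))·e^{−x²/2} dx. -/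
/-!
Under `N(u, I)` the score `⟨w, φ⟩` is Gaussian with mean `⟨u, φ⟩` and variance `‖φ‖²`: its
characteristic function is the product of those of the independent coordinates. The
misclassification event is the half-line `⟨w, φ⟩ ≤ 0` (for `y = 1`) or `⟨w, φ⟩ > 0`
(for `y = -1`); writing a Gaussian as an affine image of the standard one turns its probability
into a standard Gaussian tail, using the symmetry `x ↦ -x` for the closed half-line.
-/

open MeasureTheory ProbabilityTheory

/-- `sign(a) = +1` if `a > 0` and `sign(a) = -1` otherwise. -/
noncomputable def sgn (a : ℝ) : ℤ := if 0 < a then 1 else -1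

/-- Standard Gaussian upper tail `Φ(a) = ∫_a^∞ (1/√(2π)) e^{-x²/2} dx`. -/
noncomputable def gaussTail (a : ℝ) : ℝ :=
  ∫ x in Set.Ioi a, (Real.sqrt (2 * Real.pi))⁻¹ * Real.exp (-x ^ 2 / 2)

open Real Set
open scoped NNReal

lemma map_sum_pi_gaussianReal {ι : Type*} [Fintype ι] (m : ι → ℝ) (v : ι → ℝ≥0) :
    (Measure.pi fun i => gaussianReal (m i) (v i)).map (fun x => ∑ i, x i)
      = gaussianReal (∑ i, m i) (∑ i, v i) := by
  refine Measure.ext_of_charFun ?_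
  ext t
  rw [charFun_map_sum_pi_eq_prod]
  simp [charFun_gaussianReal, ← Complex.exp_sum, Finset.mul_sum, Finset.sum_mul, Finset.sum_div]

lemma map_sum_mul_pi_gaussianReal {ι : Type*} [Fintype ι] (m : ι → ℝ) (v : ι → ℝ≥0)
    (φ : ι → ℝ) :
    (Measure.pi fun i => gaussianReal (m i) (v i)).map (fun x => ∑ i, x i * φ i)
      = gaussianReal (∑ i, m i * φ i) (∑ i, ‖φ i‖₊ ^ 2 * v i) := by
  have : (fun x : ι → ℝ => ∑ i, x i * φ i) = (fun x => ∑ i, x i) ∘ (fun x i => x i * φ i) := rfl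
  rw [this, ← Measure.map_map (by fun_prop) (by fun_prop),
    Measure.pi_map_pi (f := fun i x => x * φ i) (fun i => by fun_prop)]
  simp_rw [gaussianReal_map_mul_const, map_sum_pi_gaussianReal, mul_comm (φ _)]
  congr
  ext i
  simp

lemma gaussianReal_eq_map_standard (m : ℝ) (v : ℝ≥0) :
    gaussianReal m v = (gaussianReal 0 1).map (fun x => √v * x + m) := by
  have : (fun x : ℝ => √v * x + m) = (· + m) ∘ (√v * ·) := rfl
  rw [this, ← Measure.map_map (by fun_prop) (by fun_prop), gaussianReal_map_const_mul,
    gaussianReal_map_add_const]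
  congr 1
  · simp
  · ext; simp

lemma gaussTail_eq_gaussianReal_Ioi (a : ℝ) :
    gaussTail a = (gaussianReal 0 1 (Ioi a)).toReal := by
  rw [gaussianReal_apply_eq_integral 0 one_ne_zero, ENNReal.toReal_ofReal
    (setIntegral_nonneg measurableSet_Ioi fun x _ => gaussianPDFReal_nonneg _ _ _)]
  simp [gaussTail, gaussianPDFReal]

lemma gaussianReal_zero_one_Iic (c : ℝ) :
    gaussianReal 0 1 (Iic c) = gaussianReal 0 1 (Ioi (-c)) := by
  conv_lhs =>
    rw [← neg_zero, ← gaussianReal_map_neg, Measure.map_apply measurable_neg measurableSet_Iic]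
  rw [neg_preimage, neg_Iic]
  exact measure_congr ((gaussianReal_absolutelyContinuous 0 one_ne_zero).ae_eq Ioi_ae_eq_Ici).symm

lemma setOf_sgn_ne_one {α : Type*} (f : α → ℝ) : {x | sgn (f x) ≠ 1} = f ⁻¹' Iic 0 := by
  ext x
  simp only [mem_ofPred_eq, mem_preimage, sgn]
  split_ifs with h <;> simpa using h

lemma setOf_sgn_ne_neg_one {α : Type*} (f : α → ℝ) : {x | sgn (f x) ≠ -1} = f ⁻¹' Ioi 0 := by
  ext x
  simp only [mem_ofPred_eq, mem_preimage, sgn]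
  split_ifs with h <;> simpa using h

lemma preimage_affine_Iic_zero {a : ℝ} (ha : 0 < a) (b : ℝ) :
    (fun x => a * x + b) ⁻¹' Iic 0 = Iic (-(b / a)) := by
  ext x
  simp only [mem_preimage, mem_Iic, ← neg_div, le_div_iff₀ ha]
  constructor <;> intro <;> linarith

lemma preimage_affine_Ioi_zero {a : ℝ} (ha : 0 < a) (b : ℝ) :
    (fun x => a * x + b) ⁻¹' Ioi 0 = Ioi (-(b / a)) := by
  ext x
  simp only [mem_preimage, mem_Ioi, ← neg_div, div_lt_iff₀ ha]
  constructor <;> intro <;> linarith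

lemma gaussianReal_Iic_zero_toReal (m : ℝ) {v : ℝ≥0} (hv : v ≠ 0) :
    (gaussianReal m v (Iic 0)).toReal = gaussTail (m / √v) := by
  have hs : 0 < √(v : ℝ) := by positivity
  rw [gaussianReal_eq_map_standard, Measure.map_apply (by fun_prop) measurableSet_Iic,
    preimage_affine_Iic_zero hs, gaussianReal_zero_one_Iic, neg_neg,
    gaussTail_eq_gaussianReal_Ioi]

lemma gaussianReal_Ioi_zero_toReal (m : ℝ) {v : ℝ≥0} (hv : v ≠ 0) :
    (gaussianReal m v (Ioi 0)).toReal = gaussTail (-(m / √v)) := by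
  have hs : 0 < √(v : ℝ) := by positivity
  rw [gaussianReal_eq_map_standard, Measure.map_apply (by fun_prop) measurableSet_Ioi,
    preimage_affine_Ioi_zero hs, gaussTail_eq_gaussianReal_Ioi]

theorem gaussian_linear_classifier_error_general (d : ℕ)
    (u φ : Fin d → ℝ) (hφ : φ ≠ 0) (y : ℤ) (hy : y = 1 ∨ y = -1) :
    ((Measure.pi fun i : Fin d => gaussianReal (u i) 1)
        {w : Fin d → ℝ | sgn (∑ i, w i * φ i) ≠ y}).toReal =
      gaussTail ((y : ℝ) * (∑ i, u i * φ i) / Real.sqrt (∑ i, φ i ^ 2)) := by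
  set f := fun w : Fin d → ℝ => ∑ i, w i * φ i
  have hf : Measurable f := by fun_prop
  have hlaw : (Measure.pi fun i => gaussianReal (u i) 1).map f
      = gaussianReal (∑ i, u i * φ i) (∑ i, ‖φ i‖₊ ^ 2 * 1) :=
    map_sum_mul_pi_gaussianReal u (fun _ => 1) φ
  have hv : ∑ i, ‖φ i‖₊ ^ 2 * (1 : ℝ≥0) ≠ 0 := by
    simpa [Finset.sum_eq_zero_iff, funext_iff] using hφ
  have hnorm : √((∑ i, ‖φ i‖₊ ^ 2 * 1 : ℝ≥0) : ℝ) = √(∑ i, φ i ^ 2) := by simp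
  rcases hy with rfl | rfl
  · rw [setOf_sgn_ne_one, ← Measure.map_apply hf measurableSet_Iic, hlaw,
      gaussianReal_Iic_zero_toReal _ hv, hnorm]
    simp
  · rw [setOf_sgn_ne_neg_one, ← Measure.map_apply hf measurableSet_Ioi, hlaw,
      gaussianReal_Ioi_zero_toReal _ hv, hnorm]
    simp [neg_div]

/-- **Gaussian error probability of a stochastic linear classifier (Eq. (12)).**
For `w ∼ N(u, I)`, `Pr[sign(⟨w, φ⟩) ≠ y] = Φ(y ⟨u, φ⟩ / ‖φ‖)`. -/
theorem gaussian_linear_classifier_error (d : ℕ) (hd : 1 ≤ d)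
    (u φ : Fin d → ℝ) (hφ : φ ≠ 0) (y : ℤ) (hy : y = 1 ∨ y = -1) :
    ((Measure.pi fun i : Fin d => gaussianReal (u i) 1)
        {w : Fin d → ℝ | sgn (∑ i, w i * φ i) ≠ y}).toReal =
      gaussTail ((y : ℝ) * (∑ i, u i * φ i) / Real.sqrt (∑ i, φ i ^ 2)) :=
  gaussian_linear_classifier_error_general d u φ hφ y hy
end
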